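/- arXiv:2405.12160 — 10 statements merged into one kernel-verified Lean document; each statement's English description precedes it below -/
import Mathlib

section
/- If H is a subgroup of a finite group G, then the number of maximal cyclic subgroups of H is at most the number of maximal cyclic subgroups of G. -/
def IsMaximalCyclic {G : Type*} [Group G] (H : Subgroup G) : Prop :=
  IsCyclic H ∧ ∀ K : Subgroup G, IsCyclic K → H ≤ K → H = K

/-! Given an injective hom `f : H →* G`, send each maximal cyclic subgroup `C` of `H` to some
maximal cyclic subgroup of `G` containing `f C`. The preimage of that subgroup is cyclic and
contains `C`, so by maximality it is `C`; hence the assignment is injective. -/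

section

open Function

variable {G G' : Type*} [Group G] [Group G']

lemma Subgroup.isCyclic_map (f : G →* G') (K : Subgroup G) [IsCyclic K] : IsCyclic (K.map f) :=
  isCyclic_of_surjective _ (f.subgroupMap_surjective K)

lemma Subgroup.isCyclic_comap {f : G →* G'} (hf : Injective f) (K : Subgroup G') [IsCyclic K] :
    IsCyclic (K.comap f) :=
  isCyclic_of_injective (f.subgroupComap K) fun _ _ h => Subtype.ext (hf (congrArg Subtype.val h))

lemma IsMaximalCyclic.exists_ge [Finite G] {C : Subgroup G} (hC : IsCyclic C) :
    ∃ K : Subgroup G, IsMaximalCyclic K ∧ C ≤ K := by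
  obtain ⟨K, ⟨hK, hCK⟩, hmax⟩ :=
    (Set.toFinite {K : Subgroup G | IsCyclic K ∧ C ≤ K}).exists_maximalFor id _ ⟨C, hC, le_rfl⟩
  exact ⟨K, ⟨hK, fun K' hK' hle => le_antisymm hle (hmax ⟨hK', hCK.trans hle⟩ hle)⟩, hCK⟩

lemma IsMaximalCyclic.eq_comap_of_map_le {f : G →* G'} (hf : Injective f) {C : Subgroup G}
    (hC : IsMaximalCyclic C) {K : Subgroup G'} (hK : IsCyclic K) (hCK : C.map f ≤ K) :
    C = K.comap f :=
  hC.2 _ (K.isCyclic_comap hf) (Subgroup.map_le_iff_le_comap.mp hCK)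

theorem card_isMaximalCyclic_le_of_injective [Finite G'] {f : G →* G'} (hf : Injective f) :
    Nat.card {C : Subgroup G // IsMaximalCyclic C} ≤
      Nat.card {K : Subgroup G' // IsMaximalCyclic K} := by
  have hext (C : {C : Subgroup G // IsMaximalCyclic C}) :
      ∃ K : Subgroup G', IsMaximalCyclic K ∧ C.1.map f ≤ K :=
    have := C.2.1
    IsMaximalCyclic.exists_ge (C.1.isCyclic_map f)
  choose g hg hCg using hext
  refine Nat.card_le_card_of_injective (fun C => ⟨g C, hg C⟩) fun C₁ C₂ h => Subtype.ext ?_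
  rw [C₁.2.eq_comap_of_map_le hf (hg C₁).1 (hCg C₁), C₂.2.eq_comap_of_map_le hf (hg C₂).1 (hCg C₂)]
  exact congrArg (fun K => Subgroup.comap f K.1) h

end

theorem stmt2 (G : Type*) [Group G] [Finite G] (H : Subgroup G) :
    Nat.card {K : Subgroup H // IsMaximalCyclic K} ≤
      Nat.card {K : Subgroup G // IsMaximalCyclic K} :=
  card_isMaximalCyclic_le_of_injective H.subtype_injective
end

section
/- If N is a normal subgroup of a finite noncyclic group G with G/N noncyclic, then the number of maximal cyclic subgroups of G/N is at most the number of maximal cyclic subgroups of G. -/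
/-!
Every cyclic subgroup `⟨x⟩` of a quotient `f : G ↠ Q` is the image of a cyclic subgroup `⟨g⟩` of
`G` with `f g = x`, and `⟨g⟩` lies in a maximal cyclic subgroup `M` of `G`. The image of `M` is
cyclic and contains `⟨x⟩`, so if `⟨x⟩` is maximal cyclic it equals `f(M)`. Choosing one such `M`
for each maximal cyclic subgroup of `Q` is therefore injective, as `⟨x⟩` is recovered as `f(M)`.
-/

section

variable {G Q : Type*} [Group G] [Group Q]

theorem Subgroup.isCyclic_map_s3 (f : G →* Q) (H : Subgroup G) [IsCyclic H] : IsCyclic (H.map f) :=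
  isCyclic_of_surjective (f.subgroupMap H) (f.subgroupMap_surjective H)

theorem IsMaximalCyclic.exists_le [Finite G] {H : Subgroup G} (hH : IsCyclic H) :
    ∃ M : Subgroup G, IsMaximalCyclic M ∧ H ≤ M := by
  obtain ⟨M, hHM, hM⟩ := (Set.toFinite {K : Subgroup G | IsCyclic K}).exists_le_maximal hH
  exact ⟨M, ⟨hM.prop, fun K hK hMK => le_antisymm hMK (hM.2 hK hMK)⟩, hHM⟩

theorem IsMaximalCyclic.eq_map_of_le {K : Subgroup Q} (hK : IsMaximalCyclic K) (f : G →* Q)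
    {M : Subgroup G} [IsCyclic M] (hKM : K ≤ M.map f) : K = M.map f :=
  hK.2 _ (M.isCyclic_map_s3 f) hKM

theorem IsMaximalCyclic.exists_eq_map [Finite G] {K : Subgroup Q} (hK : IsMaximalCyclic K)
    {f : G →* Q} (hf : Function.Surjective f) :
    ∃ M : Subgroup G, IsMaximalCyclic M ∧ K = M.map f := by
  obtain ⟨x, rfl⟩ := (Subgroup.isCyclic_iff_exists_zpowers_eq_top K).mp hK.1
  obtain ⟨g, rfl⟩ := hf x
  obtain ⟨M, hM, hgM⟩ := IsMaximalCyclic.exists_le (Subgroup.isCyclic_zpowers g)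
  have : IsCyclic M := hM.1
  refine ⟨M, hM, hK.eq_map_of_le f ?_⟩
  rw [← MonoidHom.map_zpowers]
  exact Subgroup.map_mono hgM

theorem card_isMaximalCyclic_le_of_surjective [Finite G] {f : G →* Q}
    (hf : Function.Surjective f) :
    Nat.card {K : Subgroup Q // IsMaximalCyclic K} ≤
      Nat.card {M : Subgroup G // IsMaximalCyclic M} := by
  choose lift hlift using fun K : {K : Subgroup Q // IsMaximalCyclic K} => K.2.exists_eq_map hf
  refine Nat.card_le_card_of_injective (fun K => ⟨lift K, (hlift K).1⟩) fun K L h => ?_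
  have hKL : lift K = lift L := congrArg Subtype.val h
  exact Subtype.ext ((hlift K).2.trans (hKL ▸ (hlift L).2.symm))

end

theorem stmt3_general (G : Type*) [Group G] [Finite G] (N : Subgroup G) [N.Normal] :
    Nat.card {K : Subgroup (G ⧸ N) // IsMaximalCyclic K} ≤
      Nat.card {K : Subgroup G // IsMaximalCyclic K} :=
  card_isMaximalCyclic_le_of_surjective (QuotientGroup.mk'_surjective N)

theorem stmt3 (G : Type*) [Group G] [Finite G] (N : Subgroup G) [N.Normal]
    (hG : ¬ IsCyclic G) (hQ : ¬ IsCyclic (G ⧸ N)) :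
    Nat.card {K : Subgroup (G ⧸ N) // IsMaximalCyclic K} ≤
      Nat.card {K : Subgroup G // IsMaximalCyclic K} :=
  stmt3_general G N
end

section
/- Let p be a prime, P a nontrivial finite p-group with c cyclic subgroups, and G = P × C_p. Then the number of cyclic subgroups of G equals p(c−1)+2. -/
/-!
A cyclic subgroup `H` of `P × C_p` either projects trivially to `P`, and is then one of the two
subgroups of `1 × C_p`, or it projects onto a nontrivial cyclic subgroup `K` of `P`. In the second
case `H = ⟨(x, a)⟩` with `x ≠ 1`, so `p` divides the order of `x` and `H` meets `1 × C_p`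
trivially: `H` is the graph of one of the `p` homomorphisms `K → C_p` (there are `p` of them
because `p` divides `|K|`). Hence there are `2 + (c - 1) p` cyclic subgroups.
-/

open Subgroup

theorem Nat.card_subtype_eq_card_and_add_card_and_not {α : Type*} [Finite α] (p q : α → Prop) :
    Nat.card {a // p a} = Nat.card {a // p a ∧ q a} + Nat.card {a // p a ∧ ¬q a} := by
  classical
  rw [← Nat.card_sum]
  exact Nat.card_congr (((Equiv.subtypeSubtypeEquivSubtypeInter p q).sumCongr
    (Equiv.subtypeSubtypeEquivSubtypeInter p _)).symm.trans (Equiv.sumCompl _)).symm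

theorem Subgroup.card_subtype_isCyclic_ne_bot (G : Type*) [Group G] [Finite G] :
    Nat.card {K : Subgroup G // IsCyclic K ∧ K ≠ ⊥} =
      Nat.card {K : Subgroup G // IsCyclic K} - 1 :=
  Set.ncard_sdiff_singleton_of_mem (s := {K : Subgroup G | IsCyclic K}) (a := ⊥) Bot.isCyclic

section

variable {G A : Type*} [Group G] [Group A]

instance MonoidHom.isCyclic_range [IsCyclic G] (f : G →* A) : IsCyclic f.range :=
  isCyclic_of_surjective _ f.rangeRestrict_surjective

instance Subgroup.isCyclic_map_s5 (H : Subgroup G) [IsCyclic H] (f : G →* A) :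
    IsCyclic (H.map f) := by
  rw [← H.range_subtype, ← MonoidHom.range_comp]
  infer_instance

theorem IsCyclic.card_monoidHom_of_exponent_dvd [IsCyclic G]
    (hA : Monoid.exponent A ∣ Nat.card G) : Nat.card (G →* A) = Nat.card A := by
  obtain ⟨g, hg⟩ := IsCyclic.exists_generator (α := G)
  have hord : ∀ a : A, orderOf a ∣ orderOf g := fun a => by
    rw [orderOf_eq_card_of_forall_mem_zpowers hg]
    exact (Monoid.order_dvd_exponent a).trans hA
  refine Nat.card_eq_of_bijective (fun χ => χ g) ⟨fun χ χ' h => ?_, fun a => ?_⟩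
  · exact (MonoidHom.eq_iff_eq_on_generator hg χ χ').mpr h
  · exact ⟨monoidHomOfForallMemZpowers hg (hord a), monoidHomOfForallMemZpowers_apply_gen hg _⟩

def Subgroup.graph (K : Subgroup G) (χ : K →* A) : Subgroup (G × A) :=
  (K.subtype.prod χ).range

namespace Subgroup

theorem mem_graph {K : Subgroup G} {χ : K →* A} {g : G × A} :
    g ∈ K.graph χ ↔ ∃ k : K, ((k : G), χ k) = g := Iff.rfl

instance isCyclic_graph (K : Subgroup G) [IsCyclic K] (χ : K →* A) : IsCyclic (K.graph χ) :=
  MonoidHom.isCyclic_range _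

theorem map_fst_graph (K : Subgroup G) (χ : K →* A) :
    (K.graph χ).map (MonoidHom.fst G A) = K := by
  rw [graph, ← MonoidHom.range_comp, MonoidHom.fst_comp_prod, range_subtype]

theorem graph_injective (K : Subgroup G) : Function.Injective (K.graph (A := A)) := by
  intro χ χ' h
  ext k
  have hk : ((k : G), χ k) ∈ K.graph χ' := h ▸ mem_graph.mpr ⟨k, rfl⟩
  obtain ⟨k', hk'⟩ := mem_graph.mp hk
  obtain rfl : k' = k := Subtype.ext (congrArg Prod.fst hk')
  exact (congrArg Prod.snd hk').symm

theorem exists_graph_eq {H : Subgroup (G × A)} (hH : ∀ a : A, ((1 : G), a) ∈ H → a = 1) :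
    ∃ (K : Subgroup G) (χ : K →* A), K.graph χ = H := by
  set f := (MonoidHom.fst G A).comp H.subtype
  have hf : Function.Injective f := by
    rw [injective_iff_map_eq_one]
    rintro ⟨⟨x, a⟩, hxa⟩ (rfl : x = 1)
    obtain rfl := hH a hxa
    rfl
  set e := MonoidHom.ofInjective hf
  set χ := (MonoidHom.snd G A).comp (H.subtype.comp (e.symm : f.range →* H))
  have hcomp : (f.range.subtype.prod χ).comp (e : H →* f.range) = H.subtype := by
    ext h <;> simp [χ, e, f, MonoidHom.ofInjective_apply]
  refine ⟨f.range, χ, ?_⟩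
  calc f.range.graph χ = ((f.range.subtype.prod χ).comp (e : H →* f.range)).range := by
        rw [MonoidHom.range_comp _ (e : H →* f.range), e.range_eq_top, ← MonoidHom.range_eq_map,
          graph]
    _ = H := by rw [hcomp, range_subtype]

end Subgroup

theorem MonoidHom.ker_fst_eq_range_inr : (fst G A).ker = (inr G A).range := by
  ext ⟨x, a⟩
  simp [eq_comm, mem_prod]

theorem MonoidHom.inr_injective : Function.Injective (inr G A) :=
  fun _ _ h => congrArg Prod.snd h

theorem Subgroup.map_fst_eq_bot_iff {H : Subgroup (G × A)} :
    H.map (MonoidHom.fst G A) = ⊥ ↔ H ≤ (MonoidHom.inr G A).range := by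
  rw [map_eq_bot_iff, MonoidHom.ker_fst_eq_range_inr]

def cyclicSubgroupsOverBotEquiv :
    {H : Subgroup (G × A) // IsCyclic H ∧ H.map (MonoidHom.fst G A) = ⊥} ≃
      {B : Subgroup A // IsCyclic B} where
  toFun H := ⟨H.1.comap (MonoidHom.inr G A), by
    rw [(equivMapOfInjective _ (MonoidHom.inr G A) MonoidHom.inr_injective).isCyclic, map_comap_eq,
      inf_eq_right.mpr (map_fst_eq_bot_iff.mp H.2.2)]
    exact H.2.1⟩
  invFun B := ⟨B.1.map (MonoidHom.inr G A), have := B.2; B.1.isCyclic_map_s5 _, by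
    rw [map_fst_eq_bot_iff]; exact map_le_range _ _⟩
  left_inv H := Subtype.ext <| by
    simp only [map_comap_eq, inf_eq_right.mpr (map_fst_eq_bot_iff.mp H.2.2)]
  right_inv B := Subtype.ext <| comap_map_eq_self_of_injective MonoidHom.inr_injective B.1

theorem card_subtype_isCyclic_of_prime_card {p : ℕ} [Fact p.Prime] {C : Type*} [CommGroup C]
    (hC : Nat.card C = p) : Nat.card {B : Subgroup C // IsCyclic B} = 2 := by
  classical
  have := isCyclic_of_prime_card hC
  have := isSimpleGroup_of_prime_card hC
  rw [Nat.card_congr (Equiv.subtypeUnivEquiv fun B => B.isCyclic),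
    Nat.card_congr IsSimpleOrder.equivBool]
  simp only [Nat.card_eq_fintype_card, Fintype.card_bool]

end

section

variable {p : ℕ} [Fact p.Prime] {G A : Type*} [Group G] [Group A]

theorem IsPGroup.eq_one_of_one_mk_mem (hG : IsPGroup p G) (hA : Monoid.exponent A ∣ p)
    {H : Subgroup (G × A)} (hcyc : IsCyclic H) (hH : H.map (MonoidHom.fst G A) ≠ ⊥) {a : A}
    (ha : ((1 : G), a) ∈ H) : a = 1 := by
  obtain ⟨⟨x, b⟩, rfl⟩ := H.isCyclic_iff_exists_zpowers_eq_top.mp hcyc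
  rw [MonoidHom.map_zpowers, Ne, zpowers_eq_bot] at hH
  obtain ⟨n, hn⟩ := mem_zpowers_iff.mp ha
  rw [Prod.pow_mk, Prod.mk.injEq] at hn
  obtain ⟨hxn, rfl⟩ := hn
  have hpn : (p : ℤ) ∣ n :=
    Int.natCast_dvd_natCast.mpr (hG.dvd_orderOf hH) |>.trans (orderOf_dvd_iff_zpow_eq_one.mpr hxn)
  obtain ⟨m, rfl⟩ := (Int.natCast_dvd_natCast.mpr hA).trans hpn
  rw [zpow_mul, zpow_natCast, Monoid.pow_exponent_eq_one, one_zpow]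

noncomputable def IsPGroup.sigmaMonoidHomEquivCyclicSubgroups (hG : IsPGroup p G)
    (hA : Monoid.exponent A ∣ p) :
    (Σ K : {K : Subgroup G // IsCyclic K ∧ K ≠ ⊥}, K.1 →* A) ≃
      {H : Subgroup (G × A) // IsCyclic H ∧ H.map (MonoidHom.fst G A) ≠ ⊥} :=
  Equiv.ofBijective
    (fun χ => ⟨χ.1.1.graph χ.2, have := χ.1.2.1; inferInstance, by
      rw [map_fst_graph]; exact χ.1.2.2⟩) <| by
    refine ⟨?_, ?_⟩
    · rintro ⟨⟨K, _⟩, χ⟩ ⟨⟨K', _⟩, χ'⟩ h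
      have hgr : K.graph χ = K'.graph χ' := congrArg Subtype.val h
      obtain rfl : K = K' := by rw [← map_fst_graph K χ, hgr, map_fst_graph]
      obtain rfl := graph_injective K hgr
      rfl
    · rintro ⟨H, hcyc, hH⟩
      obtain ⟨K, χ, rfl⟩ := exists_graph_eq fun a => hG.eq_one_of_one_mk_mem hA hcyc hH
      rw [map_fst_graph] at hH
      have : IsCyclic K := map_fst_graph K χ ▸ (K.graph χ).isCyclic_map_s5 _
      exact ⟨⟨⟨K, this, hH⟩, χ⟩, rfl⟩

theorem IsPGroup.card_sigma_monoidHom [Finite G] [Finite A] (hG : IsPGroup p G)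
    (hA : Monoid.exponent A ∣ p) :
    Nat.card (Σ K : {K : Subgroup G // IsCyclic K ∧ K ≠ ⊥}, K.1 →* A) =
      (Nat.card {K : Subgroup G // IsCyclic K} - 1) * Nat.card A := by
  have := Fintype.ofFinite {K : Subgroup G // IsCyclic K ∧ K ≠ ⊥}
  have (K : Subgroup G) : Finite (K →* A) := Finite.of_injective _ DFunLike.coe_injective
  have hK (K : {K : Subgroup G // IsCyclic K ∧ K ≠ ⊥}) :
      Nat.card (K.1 →* A) = Nat.card A := by
    obtain ⟨K, hcyc, hne⟩ := K
    obtain ⟨k, hk⟩ := K.ne_bot_iff_exists_ne_one.mp hne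
    exact IsCyclic.card_monoidHom_of_exponent_dvd <|
      hA.trans <| ((hG.to_subgroup K).dvd_orderOf hk).trans (orderOf_dvd_natCard k)
  rw [Nat.card_sigma, Finset.sum_congr rfl fun K _ => hK K, Finset.sum_const, Finset.card_univ,
    smul_eq_mul, ← Nat.card_eq_fintype_card, Subgroup.card_subtype_isCyclic_ne_bot]

end

theorem stmt5_general (p : ℕ) (hp : p.Prime) (P : Type*) [Group P] [Finite P]
    (hP : IsPGroup p P) (c : ℕ) (hc : c = Nat.card {H : Subgroup P // IsCyclic H}) :
    Nat.card {H : Subgroup (P × Multiplicative (ZMod p)) // IsCyclic H}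
      = p * (c - 1) + 2 := by
  have := Fact.mk hp
  have hcard : Nat.card (Multiplicative (ZMod p)) = p := Nat.card_zmod p
  have hexp : Monoid.exponent (Multiplicative (ZMod p)) = p := ZMod.exponent p
  rw [Nat.card_subtype_eq_card_and_add_card_and_not _ fun H => H.map (MonoidHom.fst _ _) = ⊥,
    Nat.card_congr cyclicSubgroupsOverBotEquiv, card_subtype_isCyclic_of_prime_card hcard,
    ← Nat.card_congr (hP.sigmaMonoidHomEquivCyclicSubgroups hexp.dvd),
    hP.card_sigma_monoidHom hexp.dvd, hcard, hc]
  ring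

theorem stmt5 (p : ℕ) (hp : p.Prime) (P : Type*) [Group P] [Finite P] [Nontrivial P]
    (hP : IsPGroup p P) (c : ℕ) (hc : c = Nat.card {H : Subgroup P // IsCyclic H}) :
    Nat.card {H : Subgroup (P × Multiplicative (ZMod p)) // IsCyclic H}
      = p * (c - 1) + 2 :=
  stmt5_general p hp P hP c hc
end

section
/- For a prime p and a positive integer a, the group C_{p^a} × C_p has exactly ap+2 cyclic subgroups. -/
/-!
A cyclic subgroup of order `n` has exactly `φ n` generators, so the number of cyclic subgroups of
a finite group is `∑ g, 1 / φ (orderOf g)`. In a product of cyclic groups `C_m × C_n` the element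
orders are `lcm d e` with `d ∣ m`, `e ∣ n`, attained by `φ d * φ e` elements. For `C_{p^a} × C_p`,
the divisor `d = 1` contributes `1 + (p - 1) / φ p = 2` and each `d = p^(i+1)` contributes
`1 + (p - 1) = p`.
-/

open Finset Subgroup

section CyclicSubgroups

variable {G : Type*} [Group G]

theorem Subgroup.zpowers_eq_iff_mem_and_orderOf_eq {H : Subgroup G} [Finite H] {g : G} :
    zpowers g = H ↔ g ∈ H ∧ orderOf g = Nat.card H := by
  constructor
  · rintro rfl
    exact ⟨mem_zpowers g, (Nat.card_zpowers g).symm⟩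
  · rintro ⟨hg, hord⟩
    exact eq_of_le_of_card_ge (zpowers_le.mpr hg) (by rw [Nat.card_zpowers, hord])

theorem Subgroup.card_generators_eq_totient [Finite G] (H : Subgroup G) [IsCyclic H] :
    Nat.card {g : G // zpowers g = H} = (Nat.card H).totient := by
  classical
  have : Fintype H := Fintype.ofFinite H
  calc Nat.card {g : G // zpowers g = H}
      = Nat.card {g : G // g ∈ H ∧ orderOf g = Nat.card H} := by
        simp_rw [zpowers_eq_iff_mem_and_orderOf_eq]
    _ = Nat.card {h : H // orderOf h = Nat.card H} := by
        rw [← Nat.card_congr (Equiv.subtypeSubtypeEquivSubtypeInter (· ∈ H) _)]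
        simp_rw [orderOf_coe]
    _ = (Nat.card H).totient := by
        simpa only [← Fintype.card_subtype, ← Nat.card_eq_fintype_card] using
          IsCyclic.card_orderOf_eq_totient (α := H) dvd_rfl

theorem card_cyclicSubgroups_eq_sum_inv_totient_orderOf [Fintype G] :
    (Nat.card {H : Subgroup G // IsCyclic H} : ℚ) = ∑ g : G, ((orderOf g).totient : ℚ)⁻¹ := by
  classical
  have : Fintype {H : Subgroup G // IsCyclic H} := Fintype.ofFinite _
  let zpowersCyclic (g : G) : {H : Subgroup G // IsCyclic H} := ⟨zpowers g, isCyclic_zpowers g⟩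
  rw [← sum_fiberwise univ zpowersCyclic, Nat.card_eq_fintype_card, Fintype.card_eq_sum_ones]
  push_cast
  refine sum_congr rfl fun ⟨H, hH⟩ _ => ?_
  have hfiber : ∀ g ∈ univ.filter (zpowersCyclic · = ⟨H, hH⟩), orderOf g = Nat.card H := by
    intro g hg
    simp only [mem_filter, mem_univ, true_and, zpowersCyclic, Subtype.mk.injEq] at hg
    exact (zpowers_eq_iff_mem_and_orderOf_eq.mp hg).2
  rw [sum_congr rfl fun g hg => by rw [hfiber g hg], sum_const, nsmul_eq_mul]
  have hcard : #(univ.filter (zpowersCyclic · = ⟨H, hH⟩)) = (Nat.card H).totient := by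
    rw [← Fintype.card_subtype, ← Nat.card_eq_fintype_card]
    simpa [zpowersCyclic] using card_generators_eq_totient H
  rw [hcard, mul_inv_cancel₀]
  exact_mod_cast (Nat.totient_pos.mpr Nat.card_pos).ne'

theorem IsCyclic.sum_comp_orderOf [Fintype G] [IsCyclic G] {M : Type*} [AddCommMonoid M]
    (f : ℕ → M) :
    ∑ g : G, f (orderOf g) = ∑ d ∈ (Fintype.card G).divisors, d.totient • f d := by
  classical
  rw [← sum_fiberwise_of_maps_to (t := (Fintype.card G).divisors) (g := orderOf)
    fun g _ => Nat.mem_divisors.mpr ⟨orderOf_dvd_card, Fintype.card_ne_zero⟩]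
  refine sum_congr rfl fun d hd => ?_
  rw [sum_congr rfl fun g hg => by rw [(mem_filter.mp hg).2], sum_const,
    IsCyclic.card_orderOf_eq_totient (Nat.dvd_of_mem_divisors hd)]

theorem card_cyclicSubgroups_prod_of_isCyclic {A B : Type*} [Group A] [Group B]
    [Fintype A] [Fintype B] [IsCyclic A] [IsCyclic B] :
    (Nat.card {H : Subgroup (A × B) // IsCyclic H} : ℚ) =
      ∑ d ∈ (Fintype.card A).divisors, ∑ e ∈ (Fintype.card B).divisors,
        (d.totient * e.totient / (d.lcm e).totient : ℚ) := by
  rw [card_cyclicSubgroups_eq_sum_inv_totient_orderOf, Fintype.sum_prod_type]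
  simp_rw [Prod.orderOf_mk]
  rw [IsCyclic.sum_comp_orderOf fun d => ∑ y : B, ((d.lcm (orderOf y)).totient : ℚ)⁻¹]
  refine sum_congr rfl fun d _ => ?_
  rw [IsCyclic.sum_comp_orderOf fun e => ((d.lcm e).totient : ℚ)⁻¹, smul_sum]
  refine sum_congr rfl fun e _ => ?_
  simp only [nsmul_eq_mul]
  ring

end CyclicSubgroups

theorem sum_divisors_prime_pow_prime {p : ℕ} (hp : p.Prime) (a : ℕ) :
    ∑ d ∈ (p ^ a).divisors, ∑ e ∈ p.divisors,
      (d.totient * e.totient / (d.lcm e).totient : ℚ) = a * p + 2 := by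
  have hφp : (p.totient : ℚ) = p - 1 := by
    rw [Nat.totient_prime hp, Nat.cast_sub hp.one_le, Nat.cast_one]
  have hφp_ne : (p.totient : ℚ) ≠ 0 := by exact_mod_cast (Nat.totient_pos.mpr hp.pos).ne'
  have hsucc : ∀ i : ℕ, ∑ e ∈ p.divisors,
      ((p ^ (i + 1)).totient * e.totient / ((p ^ (i + 1)).lcm e).totient : ℚ) = p := by
    intro i
    have hne : ((p ^ (i + 1)).totient : ℚ) ≠ 0 := by
      exact_mod_cast (Nat.totient_pos.mpr (pow_pos hp.pos _)).ne'
    rw [hp.sum_divisors, Nat.lcm_eq_left (dvd_pow_self p i.succ_ne_zero), Nat.lcm_one_right,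
      hφp]
    field_simp
    simp
  rw [Nat.sum_divisors_prime_pow hp, sum_range_succ', sum_congr rfl fun i _ => hsucc i,
    hp.sum_divisors]
  simp only [sum_const, card_range, nsmul_eq_mul, pow_zero, Nat.lcm_one_left, Nat.totient_one,
    Nat.cast_one, one_mul, div_self hφp_ne, div_one]
  ring

theorem stmt7_general (p a : ℕ) (hp : p.Prime) :
    Nat.card {H : Subgroup (Multiplicative (ZMod (p ^ a)) × Multiplicative (ZMod p)) //
      IsCyclic H} = a * p + 2 := by
  have : NeZero p := ⟨hp.ne_zero⟩
  have : NeZero (p ^ a) := ⟨pow_ne_zero a hp.ne_zero⟩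
  have h := card_cyclicSubgroups_prod_of_isCyclic (A := Multiplicative (ZMod (p ^ a)))
    (B := Multiplicative (ZMod p))
  simp only [Fintype.card_multiplicative, ZMod.card, sum_divisors_prime_pow_prime hp] at h
  exact_mod_cast h

theorem stmt7 (p a : ℕ) (hp : p.Prime) (ha : 0 < a) :
    Nat.card {H : Subgroup (Multiplicative (ZMod (p ^ a)) × Multiplicative (ZMod p)) //
      IsCyclic H} = a * p + 2 :=
  stmt7_general p a hp
end

section
/- For a prime p and a positive integer a, the group C_{p^a} × C_p has exactly ap−a+2 maximal cyclic subgroups. -/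
/-!
In a finite `p`-group a cyclic subgroup `⟨g⟩` is maximal cyclic exactly when `g` is not a
`p`-th power: if `g = h ^ p` with `h ≠ 1` then `⟨g⟩` is a proper subgroup of `⟨h⟩`, while
if `g = h ^ m` with `p ∤ m` then `⟨g⟩ = ⟨h⟩`. In `ℤ/pᵃ × ℤ/p` the `p`-th powers are the
pairs `(x, 0)` with `p ∣ x`. Writing `x = u * p ^ s` with `u` a unit and rescaling the
generator by `u⁻¹`, every maximal cyclic subgroup has exactly one generator among `(1, y)`,
`(p ^ s, y)` with `1 ≤ s < a` and `y ≠ 0`, and `(0, 1)`; there are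
`p + (a - 1)(p - 1) + 1 = ap - a + 2` of these.
-/

open Subgroup Multiplicative

theorem IsMaximalCyclic.ne_bot {G : Type*} [Group G] [Nontrivial G] {H : Subgroup G}
    (hH : IsMaximalCyclic H) : H ≠ ⊥ := by
  rintro rfl
  obtain ⟨x, hx⟩ := exists_ne (1 : G)
  exact hx (zpowers_eq_bot.1 (hH.2 (zpowers x) inferInstance bot_le).symm)

namespace IsPGroup

variable {G : Type*} [Group G] {p : ℕ} [Fact p.Prime]

theorem mem_zpowers_pow_iff (hG : IsPGroup p G) {g : G} {k : ℕ} :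
    g ∈ zpowers (g ^ k) ↔ g = 1 ∨ ¬ p ∣ k := by
  obtain ⟨j, hj⟩ := IsPGroup.iff_orderOf.1 hG g
  rw [_root_.mem_zpowers_pow_iff, hj]
  rcases j with _ | j
  · simp [orderOf_eq_one_iff.1 (by simpa using hj)]
  · have hg : g ≠ 1 := by
      rw [Ne, ← orderOf_eq_one_iff, hj]
      exact (Nat.one_lt_pow j.succ_ne_zero (Fact.out : p.Prime).one_lt).ne'
    rw [← Nat.Coprime, Nat.coprime_pow_right_iff j.succ_pos, Nat.coprime_comm,
      (Fact.out : p.Prime).coprime_iff_not_dvd]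
    simp [hg]

theorem zpowers_pow_eq (hG : IsPGroup p G) {g : G} {k : ℕ} (hk : ¬ p ∣ k) :
    zpowers (g ^ k) = zpowers g :=
  le_antisymm (zpowers_le.2 (pow_mem (mem_zpowers g) k))
    (zpowers_le.2 (hG.mem_zpowers_pow_iff.2 (Or.inr hk)))

theorem isMaximalCyclic_iff [Finite G] [Nontrivial G] (hG : IsPGroup p G) {H : Subgroup G} :
    IsMaximalCyclic H ↔ ∃ g : G, (∀ h : G, h ^ p ≠ g) ∧ H = zpowers g := by
  constructor
  · intro hH
    obtain ⟨g, rfl⟩ := (H.isCyclic_iff_exists_zpowers_eq_top).1 hH.1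
    refine ⟨g, ?_, rfl⟩
    rintro h rfl
    have heq : zpowers (h ^ p) = zpowers h :=
      hH.2 _ inferInstance (zpowers_le.2 (pow_mem (mem_zpowers h) p))
    have h1 : h = 1 :=
      (hG.mem_zpowers_pow_iff.1 (heq ▸ mem_zpowers h)).resolve_right (not_not.2 dvd_rfl)
    exact hH.ne_bot (by rw [h1, one_pow, zpowers_one_eq_bot])
  · rintro ⟨g, hg, rfl⟩
    refine ⟨inferInstance, fun K hK hle => ?_⟩
    obtain ⟨h, rfl⟩ := (K.isCyclic_iff_exists_zpowers_eq_top).1 hK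
    obtain ⟨m, rfl⟩ : ∃ m : ℕ, h ^ m = g :=
      (isOfFinOrder_of_finite h).mem_powers_iff_mem_zpowers.2 (hle (mem_zpowers g))
    have hm : ¬ p ∣ m := by
      rintro ⟨c, rfl⟩
      exact hg (h ^ c) (by rw [← pow_mul, mul_comm])
    exact hG.zpowers_pow_eq hm

end IsPGroup

namespace ZMod

variable {p a : ℕ}

theorem not_natCast_dvd_one [Fact (1 < p)] (ha : a ≠ 0) : ¬ (p : ZMod (p ^ a)) ∣ 1 := by
  rintro ⟨c, hc⟩
  have := congrArg (castHom (dvd_pow_self p ha) (ZMod p)) hc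
  rw [map_one, map_mul, map_natCast, natCast_self, zero_mul] at this
  exact one_ne_zero this

theorem natCast_pow_ne_zero (hp : 1 < p) {s : ℕ} (hs : s < a) : (p : ZMod (p ^ a)) ^ s ≠ 0 := by
  rw [← Nat.cast_pow, Ne, natCast_eq_zero_iff, Nat.pow_dvd_pow_iff_le_right hp]
  omega

theorem pow_succ_dvd_of_intCast_mul_pow_eq {k : ℤ} {s t : ℕ} (ht : t < a)
    (h : (k : ZMod (p ^ a)) * (p : ZMod (p ^ a)) ^ s = (p : ZMod (p ^ a)) ^ t) :
    (p : ℤ) ^ (t + 1) ∣ p ^ t - k * p ^ s := by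
  have h' : ((k * p ^ s : ℤ) : ZMod (p ^ a)) = ((p ^ t : ℤ) : ZMod (p ^ a)) := by
    push_cast
    exact h
  exact (pow_dvd_pow _ ht).trans
    (by exact_mod_cast (intCast_eq_intCast_iff_dvd_sub _ _ _).1 h')

theorem le_of_intCast_mul_pow_eq (hp : 1 < p) {k : ℤ} {s t : ℕ} (ht : t < a)
    (h : (k : ZMod (p ^ a)) * (p : ZMod (p ^ a)) ^ s = (p : ZMod (p ^ a)) ^ t) : s ≤ t := by
  by_contra! hts
  have hdvd : (p : ℤ) ^ (t + 1) ∣ p ^ t :=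
    (dvd_sub_left ((pow_dvd_pow _ hts).mul_left k)).1 (pow_succ_dvd_of_intCast_mul_pow_eq ht h)
  rw [← Nat.cast_pow, ← Nat.cast_pow, Int.natCast_dvd_natCast,
    Nat.pow_dvd_pow_iff_le_right hp] at hdvd
  omega

theorem intCast_eq_one_of_mul_pow_eq (hp : p ≠ 0) {k : ℤ} {s : ℕ} (hs : s < a)
    (h : (k : ZMod (p ^ a)) * (p : ZMod (p ^ a)) ^ s = (p : ZMod (p ^ a)) ^ s) :
    (k : ZMod p) = 1 := by
  have hdvd := pow_succ_dvd_of_intCast_mul_pow_eq hs h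
  rw [show (p : ℤ) ^ s - k * p ^ s = p ^ s * (1 - k) by ring, pow_succ,
    mul_dvd_mul_iff_left (pow_ne_zero s (by exact_mod_cast hp))] at hdvd
  rw [← Int.cast_one, intCast_eq_intCast_iff_dvd_sub]
  exact hdvd

theorem exists_eq_unit_mul_pow [Fact p.Prime] {x : ZMod (p ^ a)} (hx : x ≠ 0) :
    ∃ s < a, ∃ u : (ZMod (p ^ a))ˣ, x = u * (p : ZMod (p ^ a)) ^ s := by
  have hp : p.Prime := Fact.out
  obtain ⟨s, m, hm, hxm⟩ :=
    Nat.exists_eq_pow_mul_and_not_dvd ((val_ne_zero x).2 hx) p hp.ne_one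
  have hs : s < a := by
    have : p ^ s ≤ x.val :=
      hxm ▸ Nat.le_mul_of_pos_right _ (Nat.pos_of_ne_zero (by rintro rfl; simp at hm))
    exact (Nat.pow_lt_pow_iff_right hp.one_lt).1 (this.trans_lt (val_lt x))
  have hcop : m.Coprime (p ^ a) := ((hp.coprime_iff_not_dvd.2 hm).symm).pow_right a
  refine ⟨s, hs, unitOfCoprime m hcop, ?_⟩
  rw [coe_unitOfCoprime, ← natCast_zmod_val x, hxm]
  push_cast
  ring

end ZMod

abbrev CyclicProd (p a : ℕ) : Type := Multiplicative (ZMod (p ^ a)) × Multiplicative (ZMod p)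

namespace CyclicProd

variable {p a : ℕ}

def mk (x : ZMod (p ^ a)) (y : ZMod p) : CyclicProd p a :=
  (ofAdd x, ofAdd y)

theorem mk_zpow (x : ZMod (p ^ a)) (y : ZMod p) (k : ℤ) :
    mk x y ^ k = mk ((k : ZMod (p ^ a)) * x) ((k : ZMod p) * y) := by
  simp [mk, Prod.pow_def, ← ofAdd_zsmul, zsmul_eq_mul]

theorem mk_pow (x : ZMod (p ^ a)) (y : ZMod p) (k : ℕ) :
    mk x y ^ k = mk ((k : ZMod (p ^ a)) * x) ((k : ZMod p) * y) := by
  simpa using mk_zpow x y k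

theorem mk_mem_zpowers_mk_iff {x x' : ZMod (p ^ a)} {y y' : ZMod p} :
    mk x' y' ∈ zpowers (mk x y) ↔
      ∃ k : ℤ, (k : ZMod (p ^ a)) * x = x' ∧ (k : ZMod p) * y = y' := by
  simp only [mem_zpowers_iff, mk_zpow]
  simp [mk]

theorem exists_mk_eq (g : CyclicProd p a) : ∃ x y, mk x y = g :=
  ⟨toAdd g.1, toAdd g.2, rfl⟩

abbrev CanonicalIndex (p a : ℕ) := Option {q : Fin a × ZMod p // (q.1 : ℕ) = 0 ∨ q.2 ≠ 0}

theorem card_canonicalIndex [NeZero p] (ha : a ≠ 0) :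
    Nat.card (CanonicalIndex p a) = a * p - a + 2 := by
  have hbad : Fintype.card {q : Fin a × ZMod p // ¬((q.1 : ℕ) = 0 ∨ q.2 ≠ 0)} = a - 1 := by
    have e : {q : Fin a × ZMod p // ¬((q.1 : ℕ) = 0 ∨ q.2 ≠ 0)} ≃ {s : Fin a // ¬(s : ℕ) = 0} :=
      { toFun := fun q => ⟨q.1.1, fun h => q.2 (Or.inl h)⟩
        invFun := fun s => ⟨(s.1, 0), by simpa using s.2⟩
        left_inv := by
          rintro ⟨⟨s, y⟩, h⟩
          obtain rfl : y = 0 := by tauto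
          rfl
        right_inv := fun s => rfl }
    have h0 : Fintype.card {s : Fin a // (s : ℕ) = 0} = 1 :=
      Fintype.card_eq_one_iff.2
        ⟨⟨⟨0, Nat.pos_of_ne_zero ha⟩, rfl⟩, fun s => Subtype.ext (Fin.ext s.2)⟩
    rw [Fintype.card_congr e, Fintype.card_subtype_compl, Fintype.card_fin, h0]
  have hgood := Fintype.card_subtype_compl (fun q : Fin a × ZMod p => (q.1 : ℕ) = 0 ∨ q.2 ≠ 0)
  rw [hbad, Fintype.card_prod, Fintype.card_fin, ZMod.card] at hgood
  have hle := Fintype.card_subtype_le (fun q : Fin a × ZMod p => (q.1 : ℕ) = 0 ∨ q.2 ≠ 0)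
  rw [Fintype.card_prod, Fintype.card_fin, ZMod.card] at hle
  have hap : a ≤ a * p := Nat.le_mul_of_pos_right a (Nat.pos_of_ne_zero (NeZero.ne p))
  rw [Finite.card_option, Nat.card_eq_fintype_card]
  generalize a * p = n at *
  omega

def canonicalGen : CanonicalIndex p a → CyclicProd p a
  | none => mk 0 1
  | some ⟨(s, y), _⟩ => mk ((p : ZMod (p ^ a)) ^ (s : ℕ)) y

theorem isPGroup : IsPGroup p (CyclicProd p a) :=
  IsPGroup.of_card (n := a + 1) (by
    rw [Nat.card_prod, Nat.card_congr toAdd, Nat.card_congr toAdd, Nat.card_zmod, Nat.card_zmod,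
      pow_succ])

theorem exists_pow_eq_mk_iff {x : ZMod (p ^ a)} {y : ZMod p} :
    (∃ h, h ^ p = mk x y) ↔ (p : ZMod (p ^ a)) ∣ x ∧ y = 0 := by
  constructor
  · rintro ⟨h, hx⟩
    obtain ⟨u, v, rfl⟩ := exists_mk_eq h
    rw [mk_pow, ZMod.natCast_self, zero_mul] at hx
    obtain ⟨hx, hy⟩ := Prod.mk.inj hx
    exact ⟨⟨_, hx.symm⟩, hy.symm⟩
  · rintro ⟨⟨c, rfl⟩, rfl⟩
    exact ⟨mk c 0, by rw [mk_pow]; simp⟩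

theorem canonicalGen_zpowers_injective (hp : 1 < p) :
    Function.Injective fun i : CanonicalIndex p a => zpowers (canonicalGen i) := by
  have not_mem (s : Fin a) (y : ZMod p) :
      mk ((p : ZMod (p ^ a)) ^ (s : ℕ)) y ∉ zpowers (mk 0 1) := by
    intro hmem
    obtain ⟨k, hk, -⟩ := mk_mem_zpowers_mk_iff.1 hmem
    exact ZMod.natCast_pow_ne_zero hp s.2 (by rw [← hk, mul_zero])
  rintro (_ | ⟨⟨s, y⟩, _⟩) (_ | ⟨⟨t, z⟩, _⟩) h
  · rfl
  · exact absurd (h.ge (mem_zpowers _)) (not_mem t z)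
  · exact absurd (h.le (mem_zpowers _)) (not_mem s y)
  · obtain ⟨k, hk, -⟩ := mk_mem_zpowers_mk_iff.1 (h.ge (mem_zpowers _))
    obtain ⟨l, hl, hlz⟩ := mk_mem_zpowers_mk_iff.1 (h.le (mem_zpowers _))
    obtain rfl : s = t := Fin.ext (le_antisymm
      (ZMod.le_of_intCast_mul_pow_eq hp t.2 hk) (ZMod.le_of_intCast_mul_pow_eq hp s.2 hl))
    rw [ZMod.intCast_eq_one_of_mul_pow_eq (by omega) s.2 hl, one_mul] at hlz
    subst hlz
    rfl

variable [Fact p.Prime]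

theorem zpowers_mk_mul {x : ZMod (p ^ a)} {y : ZMod p} {k : ℕ} (hk : (k : ZMod p) ≠ 0) :
    zpowers (mk ((k : ZMod (p ^ a)) * x) ((k : ZMod p) * y)) = zpowers (mk x y) := by
  rw [← mk_pow]
  exact IsPGroup.zpowers_pow_eq isPGroup (by rwa [Ne, ZMod.natCast_eq_zero_iff] at hk)

theorem isMaximalCyclic_zpowers_canonicalGen (ha : a ≠ 0) (i : CanonicalIndex p a) :
    IsMaximalCyclic (zpowers (canonicalGen i)) := by
  refine isPGroup.isMaximalCyclic_iff.2 ⟨_, ?_, rfl⟩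
  intro h hh
  rcases i with _ | ⟨⟨s, y⟩, hs | hy⟩
  all_goals obtain ⟨hx, hy'⟩ := exists_pow_eq_mk_iff.1 ⟨h, hh⟩
  · exact one_ne_zero hy'
  · rw [hs, pow_zero] at hx
    exact ZMod.not_natCast_dvd_one ha hx
  · exact hy hy'

theorem exists_canonicalGen (ha : a ≠ 0) {H : Subgroup (CyclicProd p a)}
    (hH : IsMaximalCyclic H) : ∃ i : CanonicalIndex p a, zpowers (canonicalGen i) = H := by
  obtain ⟨g, hg, rfl⟩ := isPGroup.isMaximalCyclic_iff.1 hH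
  obtain ⟨x, y, rfl⟩ := exists_mk_eq g
  have hxy : ¬ ((p : ZMod (p ^ a)) ∣ x ∧ y = 0) := fun h => by
    obtain ⟨h', hh'⟩ := exists_pow_eq_mk_iff.2 h
    exact hg h' hh'
  rcases eq_or_ne x 0 with rfl | hx
  · have hy : y ≠ 0 := fun hy => hxy ⟨dvd_zero _, hy⟩
    refine ⟨none, ?_⟩
    have := zpowers_mk_mul (a := a) (x := 0) (y := y) (k := (y⁻¹).val) (by simpa using hy)
    simpa [hy, canonicalGen] using this
  · obtain ⟨s, hs, u, rfl⟩ := ZMod.exists_eq_unit_mul_pow hx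
    set k := ((u⁻¹ : (ZMod (p ^ a))ˣ) : ZMod (p ^ a)).val
    have hk : (k : ZMod p) ≠ 0 := by
      rw [ZMod.natCast_val, ← ZMod.castHom_apply (h := dvd_pow_self p ha)]
      exact ((u⁻¹).isUnit.map _).ne_zero
    have hy' : s = 0 ∨ (k : ZMod p) * y ≠ 0 := by
      refine or_iff_not_imp_left.2 fun hs0 => mul_ne_zero hk fun hy => hxy ⟨?_, hy⟩
      exact (dvd_pow_self _ hs0).mul_left _
    refine ⟨some ⟨(⟨s, hs⟩, (k : ZMod p) * y), hy'⟩, ?_⟩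
    rw [← zpowers_mk_mul hk, ZMod.natCast_zmod_val, Units.inv_mul_cancel_left]
    rfl

noncomputable def maxCyclicEquiv (ha : a ≠ 0) :
    CanonicalIndex p a ≃ {H : Subgroup (CyclicProd p a) // IsMaximalCyclic H} :=
  Equiv.ofBijective
    (fun i => ⟨zpowers (canonicalGen i), isMaximalCyclic_zpowers_canonicalGen ha i⟩)
    ⟨fun _ _ h =>
        canonicalGen_zpowers_injective (Fact.out : p.Prime).one_lt (congrArg Subtype.val h),
      fun ⟨_, hH⟩ => (exists_canonicalGen ha hH).imp fun _ hi => Subtype.ext hi⟩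

end CyclicProd

theorem stmt8 (p a : ℕ) (hp : p.Prime) (ha : 0 < a) :
    Nat.card {H : Subgroup (Multiplicative (ZMod (p ^ a)) × Multiplicative (ZMod p)) //
      IsMaximalCyclic H} = a * p - a + 2 := by
  have := Fact.mk hp
  rw [← Nat.card_congr (CyclicProd.maxCyclicEquiv ha.ne'), CyclicProd.card_canonicalIndex ha.ne']
end

section
/- If A and B are finite groups of coprime orders, then the number of maximal cyclic subgroups of A × B equals the product of the numbers of maximal cyclic subgroups of A and of B. -/
namespace Subgroup

variable {G N : Type*} [Group G] [Group N]

@[simp]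
lemma map_fst_prod (H : Subgroup G) (K : Subgroup N) : (H.prod K).map (MonoidHom.fst G N) = H := by
  ext a
  exact ⟨fun ⟨_, hp, hpa⟩ ↦ hpa ▸ hp.1, fun ha ↦ ⟨(a, 1), ⟨ha, K.one_mem⟩, rfl⟩⟩

@[simp]
lemma map_snd_prod (H : Subgroup G) (K : Subgroup N) : (H.prod K).map (MonoidHom.snd G N) = K := by
  ext b
  exact ⟨fun ⟨_, hp, hpb⟩ ↦ hpb ▸ hp.2, fun hb ↦ ⟨(1, b), ⟨H.one_mem, hb⟩, rfl⟩⟩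

lemma prod_le_prod_iff {H H' : Subgroup G} {K K' : Subgroup N} :
    H.prod K ≤ H'.prod K' ↔ H ≤ H' ∧ K ≤ K' := by
  simp only [le_prod_iff, map_fst_prod, map_snd_prod]

lemma mk_one_mem_of_mk_mem_of_coprime (hcop : (Nat.card G).Coprime (Nat.card N))
    {H : Subgroup (G × N)} {a : G} {b : N} (h : (a, b) ∈ H) : (a, 1) ∈ H := by
  have hord : (orderOf a).Coprime (orderOf b) :=
    (hcop.coprime_dvd_left (_root_.orderOf_dvd_natCard a)).coprime_dvd_right
      (_root_.orderOf_dvd_natCard b)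
  obtain ⟨k, hka, hkb⟩ := Nat.chineseRemainder hord 1 0
  have hak : a ^ k = a := by
    simpa using (pow_eq_pow_iff_modEq (x := a) (m := 1)).mpr hka
  have hbk : b ^ k = 1 := orderOf_dvd_iff_pow_eq_one.mp (Nat.modEq_zero_iff_dvd.mp hkb)
  simpa [hak, hbk] using H.pow_mem h k

lemma prod_map_fst_map_snd_of_coprime (hcop : (Nat.card G).Coprime (Nat.card N))
    (H : Subgroup (G × N)) : (H.map (MonoidHom.fst G N)).prod (H.map (MonoidHom.snd G N)) = H := by
  refine le_antisymm ?_ (le_prod_iff.mpr ⟨le_rfl, le_rfl⟩)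
  rintro ⟨x, y⟩ ⟨⟨⟨a, b'⟩, hab', hx⟩, ⟨⟨a', b⟩, ha'b, hy⟩⟩
  simp only [MonoidHom.coe_fst, MonoidHom.coe_snd] at hx hy
  subst hx hy
  have ha : ((a, 1) : G × N) ∈ H := mk_one_mem_of_mk_mem_of_coprime hcop hab'
  have hb : ((1, b) : G × N) ∈ H := by
    simpa using H.mul_mem (H.inv_mem (mk_one_mem_of_mk_mem_of_coprime hcop ha'b)) ha'b
  simpa using H.mul_mem ha hb

lemma isCyclic_prod_iff_of_coprime (hcop : (Nat.card G).Coprime (Nat.card N))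
    (H : Subgroup G) (K : Subgroup N) : IsCyclic (H.prod K) ↔ IsCyclic H ∧ IsCyclic K := by
  have hHK : (Nat.card H).Coprime (Nat.card K) :=
    (hcop.coprime_dvd_left H.card_subgroup_dvd_card).coprime_dvd_right K.card_subgroup_dvd_card
  rw [(prodEquiv H K).isCyclic, Group.isCyclic_prod_iff]
  exact ⟨fun h ↦ ⟨h.1, h.2.1⟩, fun h ↦ ⟨h.1, h.2, hHK⟩⟩

lemma isMaximalCyclic_prod_iff_of_coprime (hcop : (Nat.card G).Coprime (Nat.card N))
    (H : Subgroup G) (K : Subgroup N) :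
    IsMaximalCyclic (H.prod K) ↔ IsMaximalCyclic H ∧ IsMaximalCyclic K := by
  simp only [IsMaximalCyclic, isCyclic_prod_iff_of_coprime hcop]
  constructor
  · rintro ⟨⟨hH, hK⟩, hmax⟩
    refine ⟨⟨hH, fun H' hH' hle ↦ ?_⟩, ⟨hK, fun K' hK' hle ↦ ?_⟩⟩
    · have := hmax (H'.prod K) ((isCyclic_prod_iff_of_coprime hcop _ _).mpr ⟨hH', hK⟩)
        (prod_mono hle le_rfl)
      simpa using congrArg (map (MonoidHom.fst G N)) this
    · have := hmax (H.prod K') ((isCyclic_prod_iff_of_coprime hcop _ _).mpr ⟨hH, hK'⟩)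
        (prod_mono le_rfl hle)
      simpa using congrArg (map (MonoidHom.snd G N)) this
  · rintro ⟨⟨hH, hHmax⟩, ⟨hK, hKmax⟩⟩
    refine ⟨⟨hH, hK⟩, fun M hM hle ↦ ?_⟩
    rw [← prod_map_fst_map_snd_of_coprime hcop M] at hM hle ⊢
    rw [isCyclic_prod_iff_of_coprime hcop] at hM
    obtain ⟨hleH, hleK⟩ := prod_le_prod_iff.mp hle
    rw [hHmax _ hM.1 hleH, hKmax _ hM.2 hleK]

def maximalCyclicProdEquivOfCoprime (hcop : (Nat.card G).Coprime (Nat.card N)) :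
    {H : Subgroup (G × N) // IsMaximalCyclic H} ≃
      {H : Subgroup G // IsMaximalCyclic H} × {K : Subgroup N // IsMaximalCyclic K} where
  toFun H :=
    have hH : IsMaximalCyclic ((H.1.map (MonoidHom.fst G N)).prod (H.1.map (MonoidHom.snd G N))) :=
      (prod_map_fst_map_snd_of_coprime hcop H.1).symm ▸ H.2
    (⟨_, ((isMaximalCyclic_prod_iff_of_coprime hcop _ _).mp hH).1⟩,
      ⟨_, ((isMaximalCyclic_prod_iff_of_coprime hcop _ _).mp hH).2⟩)
  invFun HK :=
    ⟨HK.1.1.prod HK.2.1, (isMaximalCyclic_prod_iff_of_coprime hcop _ _).mpr ⟨HK.1.2, HK.2.2⟩⟩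
  left_inv H := Subtype.ext (prod_map_fst_map_snd_of_coprime hcop H.1)
  right_inv _ := Prod.ext (Subtype.ext (map_fst_prod _ _)) (Subtype.ext (map_snd_prod _ _))

end Subgroup

theorem stmt11_general (A B : Type*) [Group A] [Group B]
    (hcop : Nat.Coprime (Nat.card A) (Nat.card B)) :
    Nat.card {H : Subgroup (A × B) // IsMaximalCyclic H}
      = Nat.card {H : Subgroup A // IsMaximalCyclic H}
        * Nat.card {H : Subgroup B // IsMaximalCyclic H} := by
  rw [Nat.card_congr (Subgroup.maximalCyclicProdEquivOfCoprime hcop), Nat.card_prod]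

theorem stmt11 (A B : Type*) [Group A] [Group B] [Finite A] [Finite B]
    (hcop : Nat.Coprime (Nat.card A) (Nat.card B)) :
    Nat.card {H : Subgroup (A × B) // IsMaximalCyclic H}
      = Nat.card {H : Subgroup A // IsMaximalCyclic H}
        * Nat.card {H : Subgroup B // IsMaximalCyclic H} :=
  stmt11_general A B hcop
end

section
/- If G is a noncyclic finite p-group and t is the number of cyclic subgroups of G, then |G| ≤ t^t. -/
/-!
Let `g₀` have maximal order `p ^ m`. Every element lies in a cyclic subgroup of order at most
`p ^ m`, so `|G| ≤ t * p ^ m`; the `m + 1` subgroups of `⟨g₀⟩` are cyclic, so `m + 1 ≤ t`;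
and since `G` is not cyclic, `p ^ (m + 1) ≤ |G|`, whence `p ≤ t`.
Hence `|G| ≤ t * t ^ m ≤ t ^ t`.
-/

open Finset

theorem card_le_card_cyclicSubgroups_mul_of_forall_orderOf_le {G : Type*} [Group G] [Finite G]
    {N : ℕ} (hN : ∀ g : G, orderOf g ≤ N) :
    Nat.card G ≤ Nat.card {H : Subgroup G // IsCyclic H} * N := by
  classical
  have := Fintype.ofFinite G
  have := Fintype.ofFinite {H : Subgroup G // IsCyclic H}
  let f : G → {H : Subgroup G // IsCyclic H} := fun g => ⟨Subgroup.zpowers g, inferInstance⟩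
  have hfiber : ∀ H ∈ univ.image f, #{g ∈ univ | f g = H} ≤ N := by
    intro H hH
    obtain ⟨g₀, -, rfl⟩ := mem_image.mp hH
    calc #{g ∈ univ | f g = f g₀} ≤ #(Subgroup.zpowers g₀ : Set G).toFinset := by
          refine card_le_card fun g hg => ?_
          have hg : Subgroup.zpowers g = Subgroup.zpowers g₀ :=
            congrArg Subtype.val (mem_filter.mp hg).2
          simp [← hg]
      _ = orderOf g₀ := by rw [Set.toFinset_card]; exact Fintype.card_zpowers
      _ ≤ N := hN g₀
  calc Nat.card G = #(univ : Finset G) := by simp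
    _ ≤ N * #(univ.image f) := card_le_mul_card_image _ N hfiber
    _ ≤ N * Nat.card {H : Subgroup G // IsCyclic H} := by
          gcongr; rw [Nat.card_eq_fintype_card]; exact card_le_univ _
    _ = _ := mul_comm _ _

theorem card_divisors_orderOf_le_card_cyclicSubgroups {G : Type*} [Group G] [Finite G] (g : G) :
    #(orderOf g).divisors ≤ Nat.card {H : Subgroup G // IsCyclic H} := by
  have hg : orderOf g ≠ 0 := (orderOf_pos g).ne'
  let f : (orderOf g).divisors → {H : Subgroup G // IsCyclic H} :=
    fun d => ⟨Subgroup.zpowers (g ^ (orderOf g / d)), inferInstance⟩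
  have hcard (d : (orderOf g).divisors) :
      Nat.card (Subgroup.zpowers (g ^ (orderOf g / d))) = d := by
    rw [Nat.card_zpowers, orderOf_pow_orderOf_div hg (Nat.dvd_of_mem_divisors d.2)]
  have hf : Function.Injective f := fun d e hde =>
    Subtype.ext <| (hcard d).symm.trans <| (congrArg (fun H => Nat.card H.1) hde).trans (hcard e)
  rw [← Nat.card_eq_finsetCard]
  exact Nat.card_le_card_of_injective f hf

theorem IsPGroup.prime_mul_orderOf_le_card {p : ℕ} [Fact p.Prime] {G : Type*} [Group G]
    [Finite G] (hG : IsPGroup p G) (hnc : ¬ IsCyclic G) (g : G) :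
    p * orderOf g ≤ Nat.card G := by
  obtain ⟨n, hn⟩ := IsPGroup.iff_card.mp hG
  obtain ⟨m, hmn, hm⟩ := (Nat.dvd_prime_pow Fact.out).mp (hn ▸ orderOf_dvd_natCard g)
  have hmn : m < n := hmn.lt_of_ne fun h => hnc (isCyclic_of_orderOf_eq_card g (by rw [hm, hn, h]))
  rw [hm, hn, ← pow_succ']
  exact Nat.pow_le_pow_right (Fact.out : p.Prime).pos hmn

theorem stmt13 (p : ℕ) (hp : p.Prime) (G : Type*) [Group G] [Finite G]
    (hG : IsPGroup p G) (hnc : ¬ IsCyclic G) (t : ℕ)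
    (ht : t = Nat.card {H : Subgroup G // IsCyclic H}) :
    Nat.card G ≤ t ^ t := by
  have : Fact p.Prime := ⟨hp⟩
  obtain ⟨g₀, hg₀⟩ := Finite.exists_max (orderOf : G → ℕ)
  obtain ⟨m, hm⟩ := IsPGroup.iff_orderOf.mp hG g₀
  have hcover : Nat.card G ≤ t * p ^ m :=
    ht ▸ hm ▸ card_le_card_cyclicSubgroups_mul_of_forall_orderOf_le hg₀
  have hchain : m + 1 ≤ t := by
    simpa [ht, hm, Nat.divisors_prime_pow hp] using
      card_divisors_orderOf_le_card_cyclicSubgroups g₀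
  have hpt : p ≤ t := by
    have := (hm ▸ hG.prime_mul_orderOf_le_card hnc g₀).trans hcover
    exact Nat.le_of_mul_le_mul_right this (pow_pos hp.pos m)
  calc Nat.card G ≤ t * p ^ m := hcover
    _ ≤ t * t ^ m := by gcongr
    _ = t ^ (m + 1) := (pow_succ' t m).symm
    _ ≤ t ^ t := Nat.pow_le_pow_right (by omega) hchain
end

section
/- Let G be a finite group and suppose g ∈ G normalizes every maximal cyclic subgroup of G. Then g normalizes every subgroup of G. -/
section

open Subgroup

variable {G : Type*} [Group G]

theorem exists_isMaximalCyclic_le [Finite G] (K : Subgroup G) [IsCyclic K] :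
    ∃ M : Subgroup G, K ≤ M ∧ IsMaximalCyclic M := by
  obtain ⟨M, hKM, hM⟩ := Finite.exists_le_maximal (p := fun H : Subgroup G ↦ IsCyclic H) ‹_›
  exact ⟨M, hKM, hM.1, fun L hL hML ↦ le_antisymm hML (hM.2 hL hML)⟩

theorem conj_mem_zpowers_of_mem_normalizer_zpowers {g m x : G}
    (hg : g ∈ normalizer (zpowers m : Set G)) (hx : x ∈ zpowers m) :
    g * x * g⁻¹ ∈ zpowers x := by
  obtain ⟨t, ht⟩ := mem_zpowers_iff.1 ((mem_normalizer_iff.1 hg m).1 (mem_zpowers m))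
  obtain ⟨k, rfl⟩ := mem_zpowers_iff.1 hx
  refine mem_zpowers_iff.2 ⟨t, ?_⟩
  rw [← zpow_mul, mul_comm, zpow_mul, ht, conj_zpow]

theorem mem_normalizer_zpowers_of_mem_normalizer {g x : G} {M : Subgroup G} (hM : IsCyclic M)
    (hg : g ∈ normalizer (M : Set G)) (hx : x ∈ M) : g ∈ normalizer (zpowers x : Set G) := by
  obtain ⟨m, rfl⟩ := (M.isCyclic_iff_exists_zpowers_eq_top).1 hM
  have hxm : zpowers x ≤ zpowers m := zpowers_le.2 hx
  refine mem_normalizer_iff.2 fun y ↦ ⟨fun hy ↦ ?_, fun hy ↦ ?_⟩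
  · exact zpowers_le.2 hy (conj_mem_zpowers_of_mem_normalizer_zpowers hg (hxm hy))
  · -- `g⁻¹` also normalizes `zpowers m`, and it conjugates `g * y * g⁻¹` back to `y`.
    refine zpowers_le.2 hy ?_
    simpa [mul_assoc] using
      conj_mem_zpowers_of_mem_normalizer_zpowers (inv_mem hg) (hxm hy)

theorem mem_normalizer_of_forall_mem_normalizer_zpowers {g : G}
    (hg : ∀ x : G, g ∈ normalizer (zpowers x : Set G)) (H : Subgroup G) :
    g ∈ normalizer (H : Set G) := by
  refine mem_normalizer_iff.2 fun h ↦ ⟨fun hh ↦ ?_, fun hh ↦ ?_⟩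
  · exact zpowers_le.2 hh <| (mem_normalizer_iff.1 (hg h) h).1 (mem_zpowers h)
  · refine zpowers_le.2 hh ?_
    simpa [mul_assoc] using (mem_normalizer_iff''.1 (hg (g * h * g⁻¹)) _).1 (mem_zpowers _)

end

theorem stmt14 (G : Type*) [Group G] [Finite G] (g : G)
    (hg : ∀ H : Subgroup G, IsMaximalCyclic H → g ∈ Subgroup.normalizer (H : Set G)) :
    ∀ H : Subgroup G, g ∈ Subgroup.normalizer (H : Set G) := by
  refine mem_normalizer_of_forall_mem_normalizer_zpowers fun x ↦ ?_
  obtain ⟨M, hxM, hM⟩ := exists_isMaximalCyclic_le (Subgroup.zpowers x)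
  exact mem_normalizer_zpowers_of_mem_normalizer hM.1 (hg M hM) (hxM (Subgroup.mem_zpowers x))
end

section
/- Let G be a noncyclic finite p-group of exponent p^m and order p^n, with t cyclic subgroups. Then p^{n−m} ≤ t. -/
/-!
Every element `g` lies in the cyclic subgroup `⟨g⟩`, so `G` is the union of its `t` cyclic
subgroups, and a cyclic subgroup has at most `exp G` elements. Hence `|G| ≤ exp G · t`, that is
`p ^ n ≤ p ^ m · t`.
-/

theorem Subgroup.card_le_exponent_of_isCyclic {G : Type*} [Group G] [Finite G]
    (H : Subgroup G) [IsCyclic H] : Nat.card H ≤ Monoid.exponent G := by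
  rw [← IsCyclic.exponent_eq_card]
  refine Nat.le_of_dvd (Monoid.exponent_pos.mpr .of_finite) (Monoid.exponent_dvd.mpr fun h => ?_)
  rw [← Subgroup.orderOf_coe]
  exact Monoid.order_dvd_exponent (h : G)

theorem Nat.card_le_exponent_mul_card_isCyclic_subgroups (G : Type*) [Group G] [Finite G] :
    Nat.card G ≤ Monoid.exponent G * Nat.card {H : Subgroup G // IsCyclic H} := by
  have := Fintype.ofFinite {H : Subgroup G // IsCyclic H}
  have cover : Function.Surjective fun x : Σ H : {H : Subgroup G // IsCyclic H}, H.1 => (x.2 : G) :=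
    fun g => ⟨⟨⟨Subgroup.zpowers g, inferInstance⟩, ⟨g, Subgroup.mem_zpowers g⟩⟩, rfl⟩
  calc Nat.card G
      ≤ ∑ H : {H : Subgroup G // IsCyclic H}, Nat.card H.1 := by
        rw [← Nat.card_sigma]
        exact Nat.card_le_card_of_surjective _ cover
    _ ≤ ∑ _H : {H : Subgroup G // IsCyclic H}, Monoid.exponent G :=
        Finset.sum_le_sum fun H _ => have := H.2; H.1.card_le_exponent_of_isCyclic
    _ = Monoid.exponent G * Nat.card {H : Subgroup G // IsCyclic H} := by
        rw [Finset.sum_const, Finset.card_univ, Nat.card_eq_fintype_card, smul_eq_mul, mul_comm]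

theorem stmt15_general (p m n : ℕ) (G : Type*) [Group G] [Finite G]
    (hexp : Monoid.exponent G = p ^ m) (hord : Nat.card G = p ^ n) (t : ℕ)
    (ht : t = Nat.card {H : Subgroup G // IsCyclic H}) :
    p ^ (n - m) ≤ t := by
  have hcover : p ^ n ≤ p ^ m * t := by
    rw [← hord, ← hexp, ht]
    exact Nat.card_le_exponent_mul_card_isCyclic_subgroups G
  rcases le_or_gt m n with hmn | hnm
  · have hpm : 0 < p ^ m := hexp ▸ Monoid.exponent_pos.mpr .of_finite
    refine Nat.le_of_mul_le_mul_left ?_ hpm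
    rwa [← pow_add, Nat.add_sub_cancel' hmn]
  · have : Nonempty {H : Subgroup G // IsCyclic H} := ⟨⟨⊥, Bot.isCyclic⟩⟩
    rw [Nat.sub_eq_zero_of_le hnm.le, pow_zero, ht]
    exact Nat.card_pos

theorem stmt15 (p m n : ℕ) (hp : p.Prime) (G : Type*) [Group G] [Finite G]
    (hG : IsPGroup p G) (hnc : ¬ IsCyclic G)
    (hexp : Monoid.exponent G = p ^ m) (hord : Nat.card G = p ^ n) (t : ℕ)
    (ht : t = Nat.card {H : Subgroup G // IsCyclic H}) :
    p ^ (n - m) ≤ t :=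
  stmt15_general p m n G hexp hord t ht
end

section
/- For every integer m ≥ 4 there exists a noncyclic finite abelian group G with exactly m cyclic subgroups. -/
/-!
For a prime `p` and `k ≥ 1`, the cyclic subgroups of `ℤ/p × ℤ/p^k` are the trivial one, `⟨(1, 0)⟩`,
and the `p * k` subgroups `⟨(a, p^t)⟩` with `a ∈ ℤ/p`, `t < k`. Multiplying a generator by an
integer prime to `p` does not change the subgroup, so the second coordinate of a generator can be
normalised to a power `p^t`; the order `p^(k-t)` then recovers `t`, and `t` forces `a`. Hence this
noncyclic group has `p * k + 2` cyclic subgroups, and it remains to write `m - 2 = p * k` with `p`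
the least prime factor of `m - 2`.
-/

open Subgroup AddSubgroup

theorem Nat.card_isCyclic_subgroup_eq_of_zpowers {G ι : Type*} [Group G] (g : ι → G)
    (hinj : Function.Injective fun i ↦ zpowers (g i))
    (hsurj : ∀ x : G, ∃ i, zpowers x = zpowers (g i)) :
    Nat.card {H : Subgroup G // IsCyclic H} = Nat.card ι := by
  refine (Nat.card_eq_of_bijective (fun i ↦ ⟨zpowers (g i), inferInstance⟩) ⟨?_, ?_⟩).symm
  · exact fun i j h ↦ hinj (congrArg Subtype.val h)
  · rintro ⟨H, hH⟩
    obtain ⟨x, rfl⟩ := (Subgroup.isCyclic_iff_exists_zpowers_eq_top H).mp hH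
    obtain ⟨i, hi⟩ := hsurj x
    exact ⟨i, Subtype.ext hi.symm⟩

theorem zpowers_ofAdd_eq_zpowers_ofAdd_iff {A : Type*} [AddGroup A] {x y : A} :
    zpowers (Multiplicative.ofAdd x) = zpowers (Multiplicative.ofAdd y) ↔
      zmultiples x = zmultiples y := by
  rw [← SetLike.coe_set_eq, ← ofAdd_image_zmultiples_eq_zpowers_ofAdd,
    ← ofAdd_image_zmultiples_eq_zpowers_ofAdd,
    Set.image_eq_image Multiplicative.ofAdd.injective, SetLike.coe_set_eq]

theorem zmultiples_nsmul_eq_of_coprime {A : Type*} [AddGroup A] {x : A} {c : ℕ}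
    (h : c.Coprime (addOrderOf x)) : zmultiples (c • x) = zmultiples x :=
  le_antisymm (zmultiples_le_of_mem (nsmul_mem (mem_zmultiples x) c))
    (zmultiples_le_of_mem (mem_zmultiples_nsmul_iff.mpr h))

namespace ZMod

variable {p k t : ℕ} [hp : Fact p.Prime]

theorem exists_eq_natCast_prime_pow_mul {b : ZMod (p ^ k)} (hb : b ≠ 0) :
    ∃ t < k, ∃ c, ¬ p ∣ c ∧ b = ((p ^ t * c : ℕ) : ZMod (p ^ k)) := by
  have hval : b.val ≠ 0 := (val_ne_zero b).mpr hb
  obtain ⟨t, c, hc, hbc⟩ := Nat.exists_eq_pow_mul_and_not_dvd hval p hp.out.ne_one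
  refine ⟨t, ?_, c, hc, by rw [← hbc, natCast_zmod_val]⟩
  have : p ^ t < p ^ k := calc
    p ^ t ≤ p ^ t * c := Nat.le_mul_of_pos_right _ (Nat.pos_of_ne_zero (by rintro rfl; simp at hc))
    _ = b.val := hbc.symm
    _ < p ^ k := val_lt b
  exact (Nat.pow_lt_pow_iff_right hp.out.one_lt).mp this

theorem natCast_prime_pow_ne_zero (ht : t < k) : ((p ^ t : ℕ) : ZMod (p ^ k)) ≠ 0 := by
  rw [Ne, natCast_eq_zero_iff, Nat.pow_dvd_pow_iff_le_right hp.out.one_lt]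
  omega

theorem addOrderOf_natCast_prime_pow (ht : t ≤ k) :
    addOrderOf ((p ^ t : ℕ) : ZMod (p ^ k)) = p ^ (k - t) := by
  rw [addOrderOf_coe _ (pow_ne_zero k hp.out.ne_zero), Nat.gcd_eq_right (pow_dvd_pow p ht),
    Nat.pow_div ht hp.out.pos]

theorem intCast_eq_of_zsmul_prime_pow_eq (ht : t < k) {m n : ℤ}
    (h : m • ((p ^ t : ℕ) : ZMod (p ^ k)) = n • ((p ^ t : ℕ) : ZMod (p ^ k))) :
    (m : ZMod p) = n := by
  have hdvd : ((p ^ (k - t) : ℕ) : ℤ) ∣ m - n := by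
    rw [← addOrderOf_natCast_prime_pow ht.le, addOrderOf_dvd_iff_zsmul_eq_zero, sub_zsmul, h,
      add_neg_cancel]
  rw [eq_comm, intCast_eq_intCast_iff_dvd_sub]
  exact (dvd_pow_self _ (by omega : k - t ≠ 0)).natCast.trans hdvd

theorem addOrderOf_prod_dvd_prime_pow (hk : k ≠ 0) (x : ZMod p × ZMod (p ^ k)) :
    addOrderOf x ∣ p ^ k := by
  rw [Prod.addOrderOf]
  refine Nat.lcm_dvd (addOrderOf_dvd_card.trans ?_) (addOrderOf_dvd_card.trans ?_) <;>
    rw [card]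
  exact dvd_pow_self p hk

theorem addOrderOf_prod_natCast_prime_pow (ht : t < k) (a : ZMod p) :
    addOrderOf (a, ((p ^ t : ℕ) : ZMod (p ^ k))) = p ^ (k - t) := by
  rw [Prod.addOrderOf_mk, addOrderOf_natCast_prime_pow ht.le]
  refine Nat.lcm_eq_right (addOrderOf_dvd_card.trans ?_)
  rw [card]
  exact dvd_pow_self p (by omega)

end ZMod

def cyclicGenerator (p k : ℕ) : (ZMod p × Fin k) ⊕ Bool → ZMod p × ZMod (p ^ k)
  | .inl (a, t) => (a, ((p ^ (t : ℕ) : ℕ) : ZMod (p ^ k)))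
  | .inr true => (1, 0)
  | .inr false => 0

section PrimePowerProduct

variable {p k : ℕ} [hp : Fact p.Prime]

theorem exists_zmultiples_eq_zmultiples_cyclicGenerator (hk : k ≠ 0)
    (x : ZMod p × ZMod (p ^ k)) : ∃ i, zmultiples x = zmultiples (cyclicGenerator p k i) := by
  have hcop {c : ℕ} (hc : ¬ p ∣ c) (y : ZMod p × ZMod (p ^ k)) :
      zmultiples (c • y) = zmultiples y := by
    refine zmultiples_nsmul_eq_of_coprime <|
      Nat.Coprime.coprime_dvd_right (ZMod.addOrderOf_prod_dvd_prime_pow hk y) ?_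
    exact (Nat.coprime_pow_right_iff (Nat.pos_of_ne_zero hk) _ _).mpr
      (hp.out.coprime_iff_not_dvd.mpr hc).symm
  obtain ⟨a, b⟩ := x
  by_cases hb : b = 0
  · subst hb
    by_cases ha : a = 0
    · exact ⟨.inr false, by rw [ha]; rfl⟩
    · refine ⟨.inr true, ?_⟩
      have hval : ¬ p ∣ a.val := fun hdvd ↦
        ha <| (ZMod.val_eq_zero a).mp (Nat.eq_zero_of_dvd_of_lt hdvd (ZMod.val_lt a))
      refine .trans ?_ (hcop hval _)
      congr 1
      ext <;> simp [cyclicGenerator]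
  · obtain ⟨t, ht, c, hc, rfl⟩ := ZMod.exists_eq_natCast_prime_pow_mul hb
    have hc' : (c : ZMod p) ≠ 0 := by rwa [Ne, ZMod.natCast_eq_zero_iff]
    refine ⟨.inl ((c : ZMod p)⁻¹ * a, ⟨t, ht⟩), ?_⟩
    refine .trans ?_ (hcop hc _)
    congr 1
    ext
    · simp [cyclicGenerator, mul_inv_cancel_left₀ hc']
    · simp [cyclicGenerator, mul_comm]

theorem zmultiples_cyclicGenerator_inl_injective :
    Function.Injective fun x : ZMod p × Fin k ↦ zmultiples (cyclicGenerator p k (.inl x)) := by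
  rintro ⟨a, t⟩ ⟨b, s⟩ h
  simp only [cyclicGenerator] at h
  have hts : t = s := by
    have := congrArg (fun H : AddSubgroup _ ↦ Nat.card H) h
    simp only [Nat.card_zmultiples, ZMod.addOrderOf_prod_natCast_prime_pow t.isLt,
      ZMod.addOrderOf_prod_natCast_prime_pow s.isLt] at this
    have := Nat.pow_right_injective hp.out.two_le this
    omega
  subst hts
  obtain ⟨n, hn⟩ := mem_zmultiples_iff.mp (h ▸ mem_zmultiples _)
  rw [Prod.smul_mk, Prod.mk.injEq] at hn
  have hn1 : (n : ZMod p) = ((1 : ℤ) : ZMod p) :=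
    ZMod.intCast_eq_of_zsmul_prime_pow_eq t.isLt (by rw [one_zsmul, hn.2])
  rw [← hn.1, zsmul_eq_mul, hn1, Int.cast_one, one_mul]

theorem zmultiples_cyclicGenerator_injective :
    Function.Injective fun i ↦ zmultiples (cyclicGenerator p k i) := by
  have inl_ne_inr (x : ZMod p × Fin k) (b : Bool) :
      zmultiples (cyclicGenerator p k (.inl x)) ≠ zmultiples (cyclicGenerator p k (.inr b)) := by
    intro h
    obtain ⟨n, hn⟩ := mem_zmultiples_iff.mp (h ▸ mem_zmultiples _)
    have hsnd : (cyclicGenerator p k (.inr b)).2 = 0 := by cases b <;> rfl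
    have := congrArg Prod.snd hn
    rw [Prod.smul_snd, hsnd, smul_zero] at this
    exact ZMod.natCast_prime_pow_ne_zero x.2.isLt this.symm
  rintro (x | _ | _) (y | _ | _) h
  · rw [zmultiples_cyclicGenerator_inl_injective h]
  all_goals first
    | rfl
    | exact absurd h (inl_ne_inr _ _)
    | exact absurd h.symm (inl_ne_inr _ _)
    | simp [cyclicGenerator, eq_comm (a := (⊥ : AddSubgroup _))] at h

theorem card_isCyclic_subgroup_multiplicative_prod (hk : k ≠ 0) :
    Nat.card {H : Subgroup (Multiplicative (ZMod p × ZMod (p ^ k))) // IsCyclic H} =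
      p * k + 2 := by
  rw [Nat.card_isCyclic_subgroup_eq_of_zpowers (Multiplicative.ofAdd ∘ cyclicGenerator p k)]
  · simp
  · intro i j h
    exact zmultiples_cyclicGenerator_injective (zpowers_ofAdd_eq_zpowers_ofAdd_iff.mp h)
  · intro x
    obtain ⟨i, hi⟩ := exists_zmultiples_eq_zmultiples_cyclicGenerator hk (Multiplicative.toAdd x)
    exact ⟨i, (zpowers_ofAdd_eq_zpowers_ofAdd_iff (x := Multiplicative.toAdd x)).mpr hi⟩

theorem not_isCyclic_multiplicative_prod (hk : k ≠ 0) :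
    ¬ IsCyclic (Multiplicative (ZMod p × ZMod (p ^ k))) := by
  rw [isCyclic_multiplicative_iff, AddGroup.isAddCyclic_prod_iff, Nat.card_zmod, Nat.card_zmod,
    Nat.coprime_pow_right_iff (Nat.pos_of_ne_zero hk), Nat.coprime_self]
  exact fun h ↦ hp.out.one_lt.ne' h.2.2

end PrimePowerProduct

theorem stmt17 (m : ℕ) (hm : 4 ≤ m) :
    ∃ (G : Type) (_ : CommGroup G) (_ : Finite G),
      ¬ IsCyclic G ∧ Nat.card {H : Subgroup G // IsCyclic H} = m := by
  set p := (m - 2).minFac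
  have : Fact p.Prime := ⟨Nat.minFac_prime (by omega)⟩
  obtain ⟨k, hpk⟩ : p ∣ m - 2 := Nat.minFac_dvd _
  have hk : k ≠ 0 := by rintro rfl; omega
  refine ⟨Multiplicative (ZMod p × ZMod (p ^ k)), inferInstance, inferInstance,
    not_isCyclic_multiplicative_prod hk, ?_⟩
  rw [card_isCyclic_subgroup_multiplicative_prod hk]
  omega
end
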